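/- arXiv:2402.00133 — 2 statements merged into one kernel-verified Lean document; each statement's English description precedes it below -/
import Mathlib

section
/- Every finite quasigroup Q of order n ≥ 1 has a generating set of size at most ⌈log₂ n⌉, where the sub-quasigroup generated by a set is the smallest subset containing it that is closed under multiplication and under left and right division. -/
/-!
If `K ⊊ H` are sub-quasigroups and `x ∈ H \ K`, then `x * K` lies in `H`, has `|K|` elements
and misses `K` (from `x * k ∈ K` we would get `x = (x * k) / k ∈ K`), so `|H| ≥ 2 |K|`. Hence
adjoining a generator outside the current closure at least doubles it, and the invariant
`2 ^ |X| < 2 |⟨X⟩|` survives adding such generators. Among the sets satisfying the invariant,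
one with the largest closure generates `Q`, and the invariant then reads `|X| ≤ ⌈log₂ |Q|⌉`.
The invariant holds for some set as soon as `|Q| ≥ 2`: either some `g` has `g * g ≠ g`, and
then `|⟨g⟩| ≥ 2`, or all elements are idempotent, and then `g, h, g * h` are distinct for any
`g ≠ h`.
-/

open Function

theorem Nat.le_clog_of_pow_lt_mul {b k n : ℕ} (hb : 1 < b) (h : b ^ k < b * n) :
    k ≤ Nat.clog b n := by
  cases k with
  | zero => exact Nat.zero_le _
  | succ k =>
    rw [pow_succ'] at h
    exact (Nat.lt_clog_iff_pow_lt hb).mpr (Nat.lt_of_mul_lt_mul_left h)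

section

variable {Q : Type*} (mul ld rd : Q → Q → Q)

def IsSubquasigroup (S : Set Q) : Prop :=
  ∀ a ∈ S, ∀ b ∈ S, mul a b ∈ S ∧ ld a b ∈ S ∧ rd a b ∈ S

def subquasigroupClosure (X : Set Q) : Set Q :=
  ⋂₀ {S | X ⊆ S ∧ IsSubquasigroup mul ld rd S}

variable {mul ld rd}

theorem subset_subquasigroupClosure (X : Set Q) : X ⊆ subquasigroupClosure mul ld rd X :=
  Set.subset_sInter fun _ hS => hS.1

theorem subquasigroupClosure_subset {X S : Set Q} (hS : IsSubquasigroup mul ld rd S)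
    (hXS : X ⊆ S) : subquasigroupClosure mul ld rd X ⊆ S :=
  Set.sInter_subset_of_mem ⟨hXS, hS⟩

theorem isSubquasigroup_subquasigroupClosure (X : Set Q) :
    IsSubquasigroup mul ld rd (subquasigroupClosure mul ld rd X) := by
  intro a ha b hb
  simp only [subquasigroupClosure, Set.mem_sInter] at ha hb ⊢
  exact ⟨fun S hS => (hS.2 a (ha S hS) b (hb S hS)).1,
    fun S hS => (hS.2 a (ha S hS) b (hb S hS)).2.1,
    fun S hS => (hS.2 a (ha S hS) b (hb S hS)).2.2⟩

theorem subquasigroupClosure_mono {X Y : Set Q} (hXY : X ⊆ Y) :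
    subquasigroupClosure mul ld rd X ⊆ subquasigroupClosure mul ld rd Y :=
  subquasigroupClosure_subset (isSubquasigroup_subquasigroupClosure Y)
    (hXY.trans (subset_subquasigroupClosure Y))

theorem mul_mem_subquasigroupClosure {X : Set Q} {a b : Q}
    (ha : a ∈ subquasigroupClosure mul ld rd X) (hb : b ∈ subquasigroupClosure mul ld rd X) :
    mul a b ∈ subquasigroupClosure mul ld rd X :=
  (isSubquasigroup_subquasigroupClosure X a ha b hb).1

theorem two_mul_ncard_le_ncard_of_mem_diff [Finite Q] (hlc : ∀ a, Injective (mul a))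
    (hrc : ∀ b, Injective fun a => mul a b) (hrd : ∀ a b, mul (rd a b) b = a)
    {K H : Set Q} (hK : IsSubquasigroup mul ld rd K) (hH : IsSubquasigroup mul ld rd H)
    (hKH : K ⊆ H) {x : Q} (hxH : x ∈ H) (hxK : x ∉ K) : 2 * K.ncard ≤ H.ncard := by
  have hdisj : Disjoint (mul x '' K) K := by
    refine Set.disjoint_left.mpr ?_
    rintro _ ⟨k, hk, rfl⟩ hxk
    have hx : rd (mul x k) k = x := hrc k (hrd _ k)
    exact hxK (hx ▸ (hK _ hxk k hk).2.2)
  have hsub : mul x '' K ∪ K ⊆ H :=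
    Set.union_subset (Set.image_subset_iff.mpr fun k hk => (hH x hxH k (hKH hk)).1) hKH
  calc 2 * K.ncard = (mul x '' K ∪ K).ncard := by
        rw [Set.ncard_union_eq hdisj, Set.ncard_image_of_injective K (hlc x)]; ring
    _ ≤ H.ncard := Set.ncard_le_ncard hsub

theorem two_mul_ncard_subquasigroupClosure_le_insert [Finite Q] (hlc : ∀ a, Injective (mul a))
    (hrc : ∀ b, Injective fun a => mul a b) (hrd : ∀ a b, mul (rd a b) b = a)
    {X : Set Q} {x : Q} (hx : x ∉ subquasigroupClosure mul ld rd X) :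
    2 * (subquasigroupClosure mul ld rd X).ncard ≤
      (subquasigroupClosure mul ld rd (insert x X)).ncard :=
  two_mul_ncard_le_ncard_of_mem_diff hlc hrc hrd (isSubquasigroup_subquasigroupClosure X)
    (isSubquasigroup_subquasigroupClosure _) (subquasigroupClosure_mono (Set.subset_insert x X))
    (subset_subquasigroupClosure _ (Set.mem_insert x X)) hx

theorem exists_two_pow_card_lt_two_mul_ncard_subquasigroupClosure [Finite Q] [Nontrivial Q]
    (hlc : ∀ a, Injective (mul a)) (hrc : ∀ b, Injective fun a => mul a b) :
    ∃ X : Finset Q, 2 ^ X.card < 2 * (subquasigroupClosure mul ld rd X).ncard := by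
  classical
  by_cases hidem : ∃ g, mul g g ≠ g
  · obtain ⟨g, hg⟩ := hidem
    have hgX : g ∈ subquasigroupClosure mul ld rd ({g} : Set Q) :=
      subset_subquasigroupClosure _ rfl
    have htwo : ({mul g g, g} : Set Q).ncard = 2 := Set.ncard_pair hg
    have hsub : ({mul g g, g} : Set Q) ⊆ subquasigroupClosure mul ld rd ({g} : Set Q) :=
      Set.insert_subset (mul_mem_subquasigroupClosure hgX hgX) (Set.singleton_subset_iff.mpr hgX)
    refine ⟨{g}, ?_⟩
    have := Set.ncard_le_ncard hsub
    simp only [Finset.card_singleton, Finset.coe_singleton]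
    omega
  · simp only [not_exists, not_not] at hidem
    obtain ⟨g, h, hgh⟩ := exists_pair_ne Q
    refine ⟨{g, h}, ?_⟩
    rw [Finset.card_pair hgh, Finset.coe_pair]
    set C := subquasigroupClosure mul ld rd ({g, h} : Set Q)
    have hgC : g ∈ C := subset_subquasigroupClosure _ (Set.mem_insert g _)
    have hhC : h ∈ C := subset_subquasigroupClosure _ (Set.mem_insert_of_mem g rfl)
    have hg : mul g h ≠ g := fun e => hgh (hlc g (e.trans (hidem g).symm)).symm
    have hh : mul g h ≠ h := fun e => hgh (hrc h (e.trans (hidem h).symm))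
    have hthree : ({mul g h, g, h} : Set Q).ncard = 3 :=
      Set.ncard_eq_three.mpr ⟨_, _, _, hg, hh, hgh, rfl⟩
    have hsub : ({mul g h, g, h} : Set Q) ⊆ C :=
      Set.insert_subset (mul_mem_subquasigroupClosure hgC hhC)
        (Set.insert_subset hgC (Set.singleton_subset_iff.mpr hhC))
    have := Set.ncard_le_ncard hsub
    omega

theorem exists_subquasigroupClosure_eq_univ [Finite Q] [Nontrivial Q]
    (hlc : ∀ a, Injective (mul a)) (hrc : ∀ b, Injective fun a => mul a b)
    (hrd : ∀ a b, mul (rd a b) b = a) :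
    ∃ X : Finset Q, subquasigroupClosure mul ld rd X = Set.univ ∧
      2 ^ X.card < 2 * Nat.card Q := by
  classical
  set P := {X : Finset Q | 2 ^ X.card < 2 * (subquasigroupClosure mul ld rd X).ncard}
  obtain ⟨X, hX, hmax⟩ := Set.exists_max_image P
    (fun X => (subquasigroupClosure mul ld rd (X : Set Q)).ncard) (Set.toFinite P)
    (exists_two_pow_card_lt_two_mul_ncard_subquasigroupClosure hlc hrc)
  have hXP : 2 ^ X.card < 2 * (subquasigroupClosure mul ld rd X).ncard := hX
  suffices huniv : subquasigroupClosure mul ld rd X = Set.univ by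
    rw [huniv, Set.ncard_univ] at hXP
    exact ⟨X, huniv, hXP⟩
  by_contra hne
  obtain ⟨x, hx⟩ := (Set.ne_univ_iff_exists_notMem _).mp hne
  have hxX : x ∉ X := fun h => hx (subset_subquasigroupClosure _ h)
  have hdouble := two_mul_ncard_subquasigroupClosure_le_insert hlc hrc hrd hx
  rw [← Finset.coe_insert] at hdouble
  have hins : insert x X ∈ P := by
    change 2 ^ _ < 2 * _
    rw [Finset.card_insert_of_notMem hxX, pow_succ]
    omega
  have := hmax _ hins
  have := Nat.one_le_two_pow (n := X.card)
  omega

end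

theorem quasigroup_small_generating_set_general {Q : Type*} [Fintype Q]
    (mul ld rd : Q → Q → Q)
    (hleft : ∀ a b : Q, ∃! x : Q, mul a x = b)
    (hright : ∀ a b : Q, ∃! y : Q, mul y a = b)
    (hrd : ∀ a b : Q, mul (rd a b) b = a) :
    ∃ X : Finset Q, X.card ≤ Nat.clog 2 (Fintype.card Q) ∧
      ∀ S : Set Q, S.Nonempty → ↑X ⊆ S →
        (∀ a ∈ S, ∀ b ∈ S, mul a b ∈ S ∧ ld a b ∈ S ∧ rd a b ∈ S) →
        ∀ q : Q, q ∈ S := by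
  rcases subsingleton_or_nontrivial Q with hQ | hQ
  · exact ⟨∅, by simp, fun S ⟨s, hs⟩ _ _ q => Subsingleton.elim s q ▸ hs⟩
  have hlc : ∀ a, Injective (mul a) := fun a _ y h => (hleft a (mul a y)).unique h rfl
  have hrc : ∀ b, Injective fun a => mul a b := fun b _ y h => (hright b (mul y b)).unique h rfl
  obtain ⟨X, hgen, hcard⟩ := exists_subquasigroupClosure_eq_univ (ld := ld) hlc hrc hrd
  rw [Nat.card_eq_fintype_card] at hcard
  refine ⟨X, Nat.le_clog_of_pow_lt_mul one_lt_two hcard, fun S _ hXS hS q => ?_⟩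
  exact subquasigroupClosure_subset hS hXS (hgen ▸ Set.mem_univ q)

/-- Every finite quasigroup of order `n ≥ 1` has a generating set of size at most
`⌈log₂ n⌉`, where generation means: every nonempty subset containing the generators
and closed under multiplication, left division and right division is all of `Q`. -/
theorem quasigroup_small_generating_set {Q : Type*} [Fintype Q]
    (mul ld rd : Q → Q → Q)
    (hleft : ∀ a b : Q, ∃! x : Q, mul a x = b)
    (hright : ∀ a b : Q, ∃! y : Q, mul y a = b)
    (hld : ∀ a b : Q, mul a (ld a b) = b)
    (hrd : ∀ a b : Q, mul (rd a b) b = a)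
    (hn : 1 ≤ Fintype.card Q) :
    ∃ X : Finset Q, X.card ≤ Nat.clog 2 (Fintype.card Q) ∧
      ∀ S : Set Q, S.Nonempty → ↑X ⊆ S →
        (∀ a ∈ S, ∀ b ∈ S, mul a b ∈ S ∧ ld a b ∈ S ∧ rd a b ∈ S) →
        ∀ q : Q, q ∈ S :=
  quasigroup_small_generating_set_general mul ld rd hleft hright hrd
end

section
/- If two finite abelian groups G and H of the same order are not isomorphic, then there exists a prime power p^e such that the number of elements of order p^e in G differs from the number of elements of order p^e in H. -/
/-!
By the structure theorem a finite abelian group is `∏ ZMod (p_i ^ e_i)` with `p_i` prime and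
`e_i > 0`. For a prime `r`, the number of solutions of `r ^ k • x = 0` is then
`r ^ ∑_{p_i = r} min k e_i`; it is also the number of elements of order `r ^ j` summed over
`j ≤ k`. Taking differences in `k`, these sums determine for every `m` how many `e_i` with
`p_i = r` equal `m`, so two groups with the same counts have the same cyclic factors.
-/

open Finset

section MinSums

variable {ι κ : Type*}

theorem sum_min_succ (s : Finset ι) (e : ι → ℕ) (k : ℕ) :
    ∑ i ∈ s, min (k + 1) (e i) = ∑ i ∈ s, min k (e i) + #{i ∈ s | k < e i} := by
  rw [card_filter, ← sum_add_distrib]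
  exact sum_congr rfl fun i _ => by split_ifs <;> omega

theorem card_filter_lt_eq_add (s : Finset ι) (e : ι → ℕ) (m : ℕ) :
    #{i ∈ s | m < e i} = #{i ∈ s | e i = m + 1} + #{i ∈ s | m + 1 < e i} := by
  classical
  rw [← card_union_of_disjoint (disjoint_filter.mpr fun _ _ h => by omega), ← filter_or]
  exact congrArg card (filter_congr fun _ _ => by omega)

theorem card_filter_eq_succ_eq_of_sum_min_eq {s : Finset ι} {t : Finset κ} {e : ι → ℕ}
    {f : κ → ℕ} (h : ∀ k, ∑ i ∈ s, min k (e i) = ∑ j ∈ t, min k (f j)) (m : ℕ) :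
    #{i ∈ s | e i = m + 1} = #{j ∈ t | f j = m + 1} := by
  have hlt : ∀ k, #{i ∈ s | k < e i} = #{j ∈ t | k < f j} := fun k => by
    have := h (k + 1)
    rw [sum_min_succ, sum_min_succ, h k] at this
    omega
  have := card_filter_lt_eq_add s e m
  have := card_filter_lt_eq_add t f m
  have := hlt m
  have := hlt (m + 1)
  omega

theorem exists_equiv_of_sum_min_eq [Fintype ι] [Fintype κ] {p e : ι → ℕ} {q f : κ → ℕ}
    (he : ∀ i, 0 < e i) (hf : ∀ j, 0 < f j)
    (h : ∀ r k, ∑ i with p i = r, min k (e i) = ∑ j with q j = r, min k (f j)) :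
    ∃ σ : ι ≃ κ, ∀ i, q (σ i) = p i ∧ f (σ i) = e i := by
  have hfiber (c : ℕ × ℕ) :
      Nat.card {i // (p i, e i) = c} = Nat.card {j // (q j, f j) = c} := by
    obtain ⟨r, _ | m⟩ := c
    · simp [Prod.ext_iff, (he _).ne', (hf _).ne']
    · simp only [Nat.card_eq_fintype_card, Fintype.card_subtype, Prod.ext_iff, ← filter_filter]
      exact card_filter_eq_succ_eq_of_sum_min_eq (h r) m
  exact ⟨_, fun i => Prod.ext_iff.mp
    (Equiv.ofFiberEquiv_map (fun c => (Finite.card_eq.mp (hfiber c)).some) i)⟩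

end MinSums

theorem Nat.gcd_prime_pow_prime_pow {p r : ℕ} (hp : p.Prime) (hr : r.Prime) (e k : ℕ) :
    Nat.gcd (p ^ e) (r ^ k) = if p = r then r ^ min k e else 1 := by
  split_ifs with h
  · subst h
    rcases le_total k e with hke | hek
    · rw [Nat.gcd_eq_right (pow_dvd_pow p hke), min_eq_left hke]
    · rw [Nat.gcd_eq_left (pow_dvd_pow p hek), min_eq_right hek]
  · exact Nat.Coprime.pow _ _ ((Nat.coprime_primes hp hr).mpr h)

section Torsion

variable {A B : Type*}

theorem card_nsmul_eq_zero_eq_sum_card_addOrderOf [AddMonoid A] [Finite A] {n : ℕ}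
    (hn : n ≠ 0) :
    Nat.card {a : A // n • a = 0} =
      ∑ d ∈ n.divisors, Nat.card {a : A // addOrderOf a = d} := by
  classical
  cases nonempty_fintype A
  simp only [Nat.card_eq_fintype_card, Fintype.card_subtype]
  exact (sum_card_addOrderOf_eq_card_nsmul_eq_zero hn).symm

theorem card_nsmul_prime_pow_eq_zero_eq_of_card_addOrderOf_eq [AddMonoid A] [AddMonoid B]
    [Finite A] [Finite B] {r : ℕ} (hr : r.Prime)
    (h : ∀ e, 0 < e →
      Nat.card {a : A // addOrderOf a = r ^ e} = Nat.card {b : B // addOrderOf b = r ^ e})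
    (k : ℕ) : Nat.card {a : A // r ^ k • a = 0} = Nat.card {b : B // r ^ k • b = 0} := by
  rw [card_nsmul_eq_zero_eq_sum_card_addOrderOf (pow_ne_zero k hr.ne_zero),
    card_nsmul_eq_zero_eq_sum_card_addOrderOf (pow_ne_zero k hr.ne_zero)]
  refine sum_congr rfl fun d hd => ?_
  obtain ⟨_ | j, -, rfl⟩ := (Nat.mem_divisors_prime_pow hr k).mp hd
  · simp
  · exact h _ j.succ_pos

theorem AddEquiv.card_nsmul_eq_zero_eq [AddMonoid A] [AddMonoid B] (φ : A ≃+ B) (n : ℕ) :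
    Nat.card {a : A // n • a = 0} = Nat.card {b : B // n • b = 0} :=
  Nat.card_congr (φ.toEquiv.subtypeEquiv fun a => by simp [← map_nsmul])

theorem card_nsmul_eq_zero_pi {ι : Type*} [Fintype ι] (A : ι → Type*) [∀ i, AddMonoid (A i)]
    (n : ℕ) :
    Nat.card {a : ∀ i, A i // n • a = 0} = ∏ i, Nat.card {a : A i // n • a = 0} := by
  rw [← Nat.card_pi]
  exact Nat.card_congr
    ((Equiv.subtypeEquivRight (q := fun a : ∀ i, A i => ∀ i, n • a i = 0)
      fun _ => funext_iff).trans
      (Equiv.subtypePiEquivPi (p := fun _ b => n • b = 0)))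

theorem ZMod.card_nsmul_eq_zero (m n : ℕ) [NeZero m] :
    Nat.card {a : ZMod m // n • a = 0} = m.gcd n := by
  calc Nat.card {a : ZMod m // n • a = 0}
      = Nat.card (nsmulAddMonoidHom (α := ZMod m) n).ker := by simp [AddMonoidHom.mem_ker]
    _ = m.gcd n := by rw [IsAddCyclic.card_nsmulAddMonoidHom_ker, Nat.card_zmod]

theorem card_nsmul_prime_pow_eq_zero_pi_zmod {ι : Type*} [Fintype ι] {p : ι → ℕ}
    (hp : ∀ i, (p i).Prime) (e : ι → ℕ) {r : ℕ} (hr : r.Prime) (k : ℕ) :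
    Nat.card {a : ∀ i, ZMod (p i ^ e i) // r ^ k • a = 0} =
      r ^ ∑ i with p i = r, min k (e i) := by
  have (i : ι) : NeZero (p i ^ e i) := ⟨pow_ne_zero _ (hp i).ne_zero⟩
  rw [card_nsmul_eq_zero_pi, ← prod_pow_eq_pow_sum, prod_filter]
  exact prod_congr rfl fun i _ => by
    rw [ZMod.card_nsmul_eq_zero, Nat.gcd_prime_pow_prime_pow (hp i) hr]

end Torsion

theorem AddCommGroup.exists_addEquiv_pi_zmod_prime_pow (A : Type*) [AddCommGroup A] [Finite A] :
    ∃ (ι : Type) (_ : Fintype ι) (p e : ι → ℕ), (∀ i, (p i).Prime) ∧ (∀ i, 0 < e i) ∧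
      Nonempty (A ≃+ ∀ i, ZMod (p i ^ e i)) := by
  classical
  obtain ⟨ι, _, p, hp, e, ⟨φ⟩⟩ := AddCommGroup.equiv_directSum_zmod_of_finite A
  have (i : {i // ¬ 0 < e i}) : Subsingleton (ZMod (p i ^ e i)) := by
    rw [Nat.eq_zero_of_not_pos i.2, pow_zero]
    infer_instance
  refine ⟨{i // 0 < e i}, inferInstance, fun i => p i, fun i => e i, fun i => hp i, fun i => i.2,
    ⟨φ.trans <| (DirectSum.addEquivProd _).trans ?_⟩⟩
  exact ((RingEquiv.piEquivPiSubtypeProd _ _).trans (RingEquiv.prodZeroRing _ _).symm).toAddEquiv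

theorem nonempty_addEquiv_pi_zmod_of_equiv {ι κ : Type*} {n : ι → ℕ} {m : κ → ℕ}
    (σ : ι ≃ κ) (h : ∀ i, m (σ i) = n i) :
    Nonempty ((∀ i, ZMod (n i)) ≃+ ∀ j, ZMod (m j)) := by
  obtain rfl : n = m ∘ σ := funext fun i => (h i).symm
  exact ⟨(RingEquiv.piCongrLeft (fun j => ZMod (m j)) σ).toAddEquiv⟩

theorem AddCommGroup.nonempty_addEquiv_of_card_addOrderOf_eq {A B : Type*} [AddCommGroup A]
    [AddCommGroup B] [Finite A] [Finite B]
    (h : ∀ p e, p.Prime → 0 < e →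
      Nat.card {a : A // addOrderOf a = p ^ e} = Nat.card {b : B // addOrderOf b = p ^ e}) :
    Nonempty (A ≃+ B) := by
  obtain ⟨ι, _, p, e, hp, he, ⟨φ⟩⟩ := exists_addEquiv_pi_zmod_prime_pow A
  obtain ⟨κ, _, q, f, hq, hf, ⟨ψ⟩⟩ := exists_addEquiv_pi_zmod_prime_pow B
  have hsum (r k : ℕ) : ∑ i with p i = r, min k (e i) = ∑ j with q j = r, min k (f j) := by
    by_cases hr : r.Prime
    · rw [← Nat.pow_right_inj hr.one_lt, ← card_nsmul_prime_pow_eq_zero_pi_zmod hp e hr,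
        ← card_nsmul_prime_pow_eq_zero_pi_zmod hq f hr, ← φ.card_nsmul_eq_zero_eq,
        ← ψ.card_nsmul_eq_zero_eq]
      exact card_nsmul_prime_pow_eq_zero_eq_of_card_addOrderOf_eq hr (h r · hr) k
    · have hpr (i : ι) : p i ≠ r := fun hi => hr (hi ▸ hp i)
      have hqr (j : κ) : q j ≠ r := fun hj => hr (hj ▸ hq j)
      simp [hpr, hqr]
  obtain ⟨σ, hσ⟩ := exists_equiv_of_sum_min_eq he hf hsum
  obtain ⟨χ⟩ := nonempty_addEquiv_pi_zmod_of_equiv (n := fun i => p i ^ e i)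
    (m := fun j => q j ^ f j) σ fun i => by simp only [hσ]
  exact ⟨φ.trans (χ.trans ψ.symm)⟩

theorem card_addOrderOf_additive_eq {G : Type*} [Monoid G] (n : ℕ) :
    Nat.card {a : Additive G // addOrderOf a = n} = Nat.card {g : G // orderOf g = n} :=
  Nat.card_congr (Additive.toMul.subtypeEquiv fun a => by rw [← addOrderOf_ofMul_eq_orderOf]; rfl)

theorem abelian_noniso_prime_power_order_count_general {G H : Type*} [CommGroup G]
    [CommGroup H] [Finite G] [Finite H]
    (hniso : ¬ Nonempty (G ≃* H)) :
    ∃ p e : ℕ, p.Prime ∧ 0 < e ∧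
      Nat.card {g : G // orderOf g = p ^ e} ≠ Nat.card {h : H // orderOf h = p ^ e} := by
  by_contra! hcount
  obtain ⟨φ⟩ := AddCommGroup.nonempty_addEquiv_of_card_addOrderOf_eq
    (A := Additive G) (B := Additive H) fun p e hp he => by
      rw [card_addOrderOf_additive_eq, card_addOrderOf_additive_eq]
      exact hcount p e hp he
  exact hniso ⟨MulEquiv.toAdditive.symm φ⟩

/-- If two finite abelian groups of the same order are not isomorphic, then for some
prime power `p^e` they have different numbers of elements of order `p^e`. -/
theorem abelian_noniso_prime_power_order_count {G H : Type*} [CommGroup G]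
    [CommGroup H] [Finite G] [Finite H]
    (hcard : Nat.card G = Nat.card H) (hniso : ¬ Nonempty (G ≃* H)) :
    ∃ p e : ℕ, p.Prime ∧ 0 < e ∧
      Nat.card {g : G // orderOf g = p ^ e} ≠ Nat.card {h : H // orderOf h = p ^ e} :=
  abelian_noniso_prime_power_order_count_general hniso
end
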